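/- Let X be a circularly ordered set and G a group acting on X effectively by sbtw-preserving bijections. Then there exist: a compact Hausdorff totally disconnected space X∞ equipped with a circular order whose circular topology coincides with its topology; an action of G on X∞ by sbtw-preserving homeomorphisms which is jointly continuous when G carries the topology of pointwise convergence on the discrete set X; and a G-equivariant injective map ν : X → X∞ which is circular-order preserving, has dense image, and whose image is a discrete subspace of X∞ (so ν is a topological embedding of the discrete space X). Moreover, if X is countable then X∞ is metrizable. -/

import Mathlib

universe u v

/-- The closed interval `{x | R a x b} ∪ {a, b}` of a ternary relation `R`. -/
def ternIcc {X : Type*} (R : X → X → X → Prop) (a b : X) : Set X :=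
  {x | R a x b} ∪ {a, b}

/-- The interval topology of a ternary (circular-order-like) relation `R`: the topology
generated by the complements of the closed intervals. -/
def ternaryTopology {X : Type*} (R : X → X → X → Prop) : TopologicalSpace X :=
  TopologicalSpace.generateFrom {s : Set X | ∃ a b : X, s = (ternIcc R a b)ᶜ}

/-- The strict betweenness relation of a given circular order structure. -/
def csbtw {Y : Type*} (c : CircularOrder Y) : Y → Y → Y → Prop :=
  letI := c
  fun x y z => sbtw x y z

/-- A map `f` between sets carrying circular-order-like ternary relations is circular-order
preserving (COP) if it maps strict betweenness to strict betweenness whenever the images are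
pairwise distinct, and whenever `f a = f c` it is constant on one of the closed intervals
`[a,c]∘`, `[c,a]∘`. -/
def IsCOP {X Y : Type*} (RX : X → X → X → Prop) (RY : Y → Y → Y → Prop) (f : X → Y) : Prop :=
  (∀ a b c : X, RX a b c → f a ≠ f b → f b ≠ f c → f c ≠ f a → RY (f a) (f b) (f c)) ∧
    (∀ a c : X, f a = f c →
      (∀ x ∈ ternIcc RX a c, f x = f a) ∨ (∀ x ∈ ternIcc RX c a, f x = f a))

/-!
`X` embeds in the Cantor cube `X × X → Bool` by sending `x` to the indicator of the closed
intervals `[a, b]∘` containing it. `X∞` is the closure of the image, and its betweenness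
relation is the closure of the image of `btw`. Compactness, total disconnectedness and, for
countable `X`, metrizability come from the cube, and `G` acts by permuting coordinates.

The circular-order axioms pass to the closure by a finite transfer principle: for a finite set
`E` of endpoints, strict betweenness of three points of `X` in pairwise distinct classes of the
relation "lie in the same intervals with endpoints in `E`" depends only on the classes. The
interval topology of a circular order is Hausdorff, and on `X∞` it is coarser than the compact
topology of the cube, so the two coincide.
-/

open Topology

section CircularOrder

variable {X : Type*} [CircularOrder X] {a b c d x : X}

theorem SBtw.sbtw.left_ne (h : sbtw a b c) : a ≠ b := by
  rintro rfl; exact sbtw_irrefl_left h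

theorem SBtw.sbtw.ne_right (h : sbtw a b c) : b ≠ c := by
  rintro rfl; exact sbtw_irrefl_right h

theorem SBtw.sbtw.left_ne_right (h : sbtw a b c) : a ≠ c := by
  rintro rfl; exact sbtw_irrefl_left_right h

theorem sbtw_of_btw_of_ne (h : btw a b c) (hab : a ≠ b) (hbc : b ≠ c) (hca : c ≠ a) :
    sbtw a b c := by
  refine sbtw_of_btw_not_btw h fun h' => ?_
  rcases h.antisymm h' with h | h | h <;> contradiction

theorem sbtw_or_sbtw_of_ne (hab : a ≠ b) (hbc : b ≠ c) (hca : c ≠ a) :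
    sbtw a b c ∨ sbtw c b a := by
  rcases btw_total a b c with h | h
  · exact .inl (sbtw_of_btw_of_ne h hab hbc hca)
  · exact .inr (sbtw_of_btw_of_ne h hbc.symm hab.symm hca.symm)

theorem sbtw_of_cyclic_four (habc : sbtw a b c) (hcda : sbtw c d a) : sbtw b c d :=
  sbtw_iff_not_btw.2 fun h => (hcda.cyclic_left.trans_left habc).not_btw h.cyclic_left

theorem sbtw_trans_mid (h₁ : sbtw a x b) (h₂ : sbtw b x c) : sbtw a x c :=
  (sbtw_trans_right h₂.cyclic_left h₁.cyclic_left).cyclic_right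

theorem ternIcc_sbtw_self (a : X) : ternIcc sbtw a a = {a} := by
  ext x
  simp [ternIcc, sbtw_irrefl_left_right]

theorem ternIcc_sbtw_of_ne (hab : a ≠ b) : ternIcc sbtw a b = Set.cIcc a b := by
  ext x
  simp only [ternIcc, Set.mem_union, Set.mem_ofPred_eq, Set.mem_insert_iff,
    Set.mem_singleton_iff, Set.mem_cIcc]
  refine ⟨?_, fun h => ?_⟩
  · rintro (h | rfl | rfl)
    exacts [h.btw, btw_rfl_left, btw_rfl_right]
  · by_cases hxa : x = a
    · exact .inr (.inl hxa)
    by_cases hxb : x = b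
    · exact .inr (.inr hxb)
    exact .inl (sbtw_of_btw_of_ne h (Ne.symm hxa) hxb hab.symm)

theorem mem_ternIcc_sbtw_iff_of_ne (hab : a ≠ b) : x ∈ ternIcc sbtw a b ↔ btw a x b := by
  rw [ternIcc_sbtw_of_ne hab, Set.mem_cIcc]

theorem notMem_ternIcc_sbtw_iff_of_ne (hab : a ≠ b) : x ∉ ternIcc sbtw a b ↔ sbtw b x a := by
  rw [mem_ternIcc_sbtw_iff_of_ne hab, sbtw_iff_not_btw]

end CircularOrder

section IntervalTopology

variable {X : Type*} [CircularOrder X]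

theorem isOpen_ternaryTopology_cIoo {a b : X} (hab : a ≠ b) :
    IsOpen[ternaryTopology sbtw] (Set.cIoo a b) :=
  .basic _ ⟨b, a, by rw [ternIcc_sbtw_of_ne hab.symm, Set.compl_cIcc]⟩

theorem isOpen_ternaryTopology_compl_singleton (a : X) :
    IsOpen[ternaryTopology sbtw] {a}ᶜ :=
  .basic _ ⟨a, a, by rw [ternIcc_sbtw_self]⟩

theorem exists_separating_cIoo_of_sbtw {u c w : X} (h : sbtw u c w) :
    ∃ U V : Set X, IsOpen[ternaryTopology sbtw] U ∧ IsOpen[ternaryTopology sbtw] V ∧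
      u ∈ U ∧ w ∈ V ∧ Disjoint U V := by
  by_cases hd : ∃ d, sbtw w d u
  · obtain ⟨d, hd⟩ := hd
    have hduc : sbtw d u c := sbtw_of_cyclic_four hd h
    refine ⟨Set.cIoo d c, Set.cIoo c d,
      isOpen_ternaryTopology_cIoo hduc.left_ne_right,
      isOpen_ternaryTopology_cIoo hduc.left_ne_right.symm,
      hduc, sbtw_of_cyclic_four h hd, Set.disjoint_left.2 fun x hx hx' => sbtw_asymm hx hx'⟩
  · push Not at hd
    refine ⟨Set.cIoo w c, Set.cIoo c u, isOpen_ternaryTopology_cIoo h.ne_right.symm,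
      isOpen_ternaryTopology_cIoo h.left_ne.symm, h.cyclic_right, h.cyclic_left,
      Set.disjoint_left.2 fun x (hx : sbtw w x c) (hx' : sbtw c x u) => ?_⟩
    rcases sbtw_or_sbtw_of_ne hx.left_ne hx'.ne_right h.left_ne_right with h' | h'
    exacts [hd x h', sbtw_asymm (sbtw_trans_mid hx' h') hx]

theorem t2Space_ternaryTopology : @T2Space X (ternaryTopology sbtw) := by
  let _ := ternaryTopology (sbtw : X → X → X → Prop)
  refine t2Space_iff _ |>.2 fun u w huw => ?_
  by_cases hc : ∃ c, sbtw u c w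
  · exact exists_separating_cIoo_of_sbtw hc.choose_spec
  by_cases hd : ∃ d, sbtw w d u
  · obtain ⟨d, hd⟩ := hd
    obtain ⟨U, V, hU, hV, hwU, huV, hUV⟩ := exists_separating_cIoo_of_sbtw hd
    exact ⟨V, U, hV, hU, huV, hwU, hUV.symm⟩
  push Not at hc hd
  refine ⟨{w}ᶜ, {u}ᶜ, isOpen_ternaryTopology_compl_singleton w,
    isOpen_ternaryTopology_compl_singleton u, huw, huw.symm,
    Set.disjoint_left.2 fun x hxw hxu => ?_⟩
  rcases sbtw_or_sbtw_of_ne (Ne.symm hxu) hxw huw.symm with h | h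
  exacts [hc x h, hd x h]

end IntervalTopology

theorem TopologicalSpace.eq_of_le_of_compactSpace_of_t2Space {α : Type*}
    {t t' : TopologicalSpace α} (h : t ≤ t') (hc : @CompactSpace α t) (ht : @T2Space α t') :
    t = t' :=
  le_antisymm h <| continuous_id_iff_le.1 <|
    @Continuous.continuous_symm_of_equiv_compact_to_t2 α α t t' hc ht (Equiv.refl α)
      (continuous_id_iff_le.2 h)

section IccEquiv

variable {X : Type*} [CircularOrder X] {E : Finset X} {a b x x' y y' z z' : X}

def IccEquiv (E : Finset X) (x y : X) : Prop :=
  ∀ a ∈ E, ∀ b ∈ E, (x ∈ ternIcc sbtw a b ↔ y ∈ ternIcc sbtw a b)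

theorem IccEquiv.refl (E : Finset X) (x : X) : IccEquiv E x x := fun _ _ _ _ => .rfl

theorem IccEquiv.symm (h : IccEquiv E x y) : IccEquiv E y x :=
  fun a ha b hb => (h a ha b hb).symm

theorem IccEquiv.trans (h : IccEquiv E x y) (h' : IccEquiv E y z) : IccEquiv E x z :=
  fun a ha b hb => (h a ha b hb).trans (h' a ha b hb)

theorem ne_of_not_iccEquiv (h : ¬IccEquiv E x y) : x ≠ y := by
  rintro rfl
  exact h (.refl E x)

theorem IccEquiv.ne_of_mem (h : IccEquiv E x y) (hxy : x ≠ y) (ha : a ∈ E) : x ≠ a := by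
  rintro rfl
  have hy : y ∈ ternIcc sbtw x x := (h x ha x ha).1 (by rw [ternIcc_sbtw_self]; rfl)
  rw [ternIcc_sbtw_self] at hy
  exact hxy hy.symm

theorem IccEquiv.forall_not_sbtw (h : IccEquiv E x y) :
    (∀ e ∈ E, ¬sbtw x e y) ∨ (∀ e ∈ E, ¬sbtw y e x) := by
  by_contra! ⟨⟨a, ha, hxay⟩, ⟨b, hb, hybx⟩⟩
  have hab : a ≠ b := by
    rintro rfl
    exact sbtw_asymm hxay hybx
  have hy : y ∈ ternIcc sbtw a b :=
    (mem_ternIcc_sbtw_iff_of_ne hab).2 (sbtw_of_cyclic_four hxay hybx).btw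
  exact (notMem_ternIcc_sbtw_iff_of_ne hab).2 (sbtw_of_cyclic_four hybx hxay)
    ((h a ha b hb).2 hy)

theorem IccEquiv.exists_mem_sbtw (h : IccEquiv E x x') (hxx' : x ≠ x') (hy : sbtw x y x')
    (ha : a ∈ E) (hb : b ∈ E) (hsep : ¬(y ∈ ternIcc sbtw a b ↔ x ∈ ternIcc sbtw a b)) :
    ∃ e ∈ E, sbtw x e x' := by
  -- the arc from `x` through `y` to `x'` crosses the boundary of `ternIcc sbtw a b`
  by_cases hyI : y ∈ ternIcc sbtw a b
  · have hxI : x ∉ ternIcc sbtw a b := fun hx => hsep (iff_of_true hyI hx)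
    by_cases hya : y = a
    · exact ⟨a, ha, hya ▸ hy⟩
    by_cases hyb : y = b
    · exact ⟨b, hb, hyb ▸ hy⟩
    have hab : a ≠ b := by
      rintro rfl
      exact hya (by simpa [ternIcc_sbtw_self] using hyI)
    have hayb : sbtw a y b := sbtw_of_btw_of_ne ((mem_ternIcc_sbtw_iff_of_ne hab).1 hyI)
      (Ne.symm hya) hyb hab.symm
    have hbxa : sbtw b x a := (notMem_ternIcc_sbtw_iff_of_ne hab).1 hxI
    exact ⟨a, ha, sbtw_trans_right (sbtw_of_cyclic_four hbxa hayb) hy⟩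
  · have hxI : x ∈ ternIcc sbtw a b := by
      by_contra hxI
      exact hsep (iff_of_false hyI hxI)
    have hxa := h.ne_of_mem hxx' ha
    have hxb := h.ne_of_mem hxx' hb
    have hab : a ≠ b := by
      rintro rfl
      exact hxa (by simpa [ternIcc_sbtw_self] using hxI)
    have haxb : sbtw a x b := sbtw_of_btw_of_ne ((mem_ternIcc_sbtw_iff_of_ne hab).1 hxI)
      (Ne.symm hxa) hxb hab.symm
    have hbya : sbtw b y a := (notMem_ternIcc_sbtw_iff_of_ne hab).1 hyI
    exact ⟨b, hb, sbtw_trans_right (sbtw_of_cyclic_four haxb hbya) hy⟩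

theorem IccEquiv.sbtw_congr_left (h : IccEquiv E x x') (hyx : ¬IccEquiv E y x)
    (hzx : ¬IccEquiv E z x) (hxyz : sbtw x y z) : sbtw x' y z := by
  by_cases hxx' : x = x'
  · exact hxx' ▸ hxyz
  by_contra hx'yz
  have hx'y : x' ≠ y := by
    rintro rfl
    exact hyx h.symm
  have hx'z : x' ≠ z := by
    rintro rfl
    exact hzx h.symm
  have hyx'z : sbtw y x' z :=
    ((sbtw_or_sbtw_of_ne hx'y hxyz.ne_right hx'z.symm).resolve_left hx'yz).cyclic_left
  have hxyx' : sbtw x y x' := (hyx'z.cyclic_left.trans_left hxyz.cyclic_right).cyclic_left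
  have hx'zx : sbtw x' z x := (hxyz.trans_left hyx'z).cyclic_left
  -- `y` and `z` now lie on opposite arcs between `x` and `x'`, and each yields a point of `E`
  rcases h.forall_not_sbtw with hgap | hgap
  · obtain ⟨a, ha, b, hb, hsep⟩ : ∃ a ∈ E, ∃ b ∈ E, _ := by simpa [IccEquiv] using hyx
    obtain ⟨e, he, hxex'⟩ := h.exists_mem_sbtw hxx' hxyx' ha hb hsep
    exact hgap e he hxex'
  · obtain ⟨a, ha, b, hb, hsep⟩ : ∃ a ∈ E, ∃ b ∈ E, _ := by simpa [IccEquiv] using hzx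
    obtain ⟨e, he, hx'ex⟩ := h.symm.exists_mem_sbtw (Ne.symm hxx') hx'zx ha hb
      fun hiff => hsep (hiff.trans (h a ha b hb).symm)
    exact hgap e he hx'ex

theorem IccEquiv.sbtw_congr (hx : IccEquiv E x x') (hy : IccEquiv E y y') (hz : IccEquiv E z z')
    (hxy : ¬IccEquiv E x y) (hyz : ¬IccEquiv E y z) (hzx : ¬IccEquiv E z x)
    (h : sbtw x y z) : sbtw x' y' z' := by
  have h₁ : sbtw x' y z := hx.sbtw_congr_left (fun h => hxy h.symm) hzx h
  have h₂ : sbtw y' z x' := hy.sbtw_congr_left (fun h => hyz h.symm)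
    (fun h => hxy (hx.trans h)) h₁.cyclic_left
  have h₃ : sbtw z' x' y' := hz.sbtw_congr_left (fun h => hzx (hx.trans h).symm)
    (fun h => hyz (hy.trans h)) h₂.cyclic_left
  exact h₃.cyclic_left

end IccEquiv

def PreservesSbtw (G X : Type*) [SMul G X] [CircularOrder X] : Prop :=
  ∀ (g : G) (a b c : X), sbtw a b c → sbtw (g • a) (g • b) (g • c)

section PreservesSbtw

variable {G X : Type*} [Group G] [MulAction G X] [CircularOrder X] {g : G} {a b c : X}

theorem PreservesSbtw.sbtw_smul_iff (h : PreservesSbtw G X) :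
    sbtw (g • a) (g • b) (g • c) ↔ sbtw a b c :=
  ⟨fun habc => by simpa using h g⁻¹ _ _ _ habc, h g a b c⟩

theorem PreservesSbtw.btw_smul (h : PreservesSbtw G X) (habc : btw a b c) :
    btw (g • a) (g • b) (g • c) := by
  rwa [btw_iff_not_sbtw, h.sbtw_smul_iff, ← btw_iff_not_sbtw]

end PreservesSbtw

theorem isOpen_setOf_eqOn {ι β : Type*} [TopologicalSpace β] [DiscreteTopology β]
    (w : ι → β) (F : Finset ι) : IsOpen {v : ι → β | Set.EqOn v w ↑F} :=
  isOpen_set_pi (s := fun i => {w i}) F.finite_toSet fun _ _ => isOpen_discrete _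

theorem exists_finset_separating {ι β : Type*} (S : Finset (ι × ι → β)) :
    ∃ E : Finset ι, ∀ u ∈ S, ∀ v ∈ S, u ≠ v → ¬Set.EqOn u v ↑(E ×ˢ E) := by
  classical
  refine ⟨S.biUnion fun u => S.biUnion fun v => if h : u ≠ v then
      {(Function.ne_iff.1 h).choose.1, (Function.ne_iff.1 h).choose.2} else ∅,
    fun u hu v hv huv h => (Function.ne_iff.1 huv).choose_spec (h ?_)⟩
  simp only [Finset.coe_product, Set.mem_prod, Finset.mem_coe, Finset.mem_biUnion]
  exact ⟨⟨u, hu, v, hv, by simp [huv]⟩, ⟨u, hu, v, hv, by simp [huv]⟩⟩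

namespace CircCompactification

open Set

abbrev Code (X : Type*) := X × X → Bool

section CodeAct

variable {X G : Type*} [Group G] [MulAction G X]

def codeAct (g : G) (w : Code X) : Code X := fun p => w (g⁻¹ • p)

theorem codeAct_one (w : Code X) : codeAct (1 : G) w = w := by
  funext p
  simp [codeAct]

theorem codeAct_mul (g h : G) (w : Code X) : codeAct (g * h) w = codeAct g (codeAct h w) := by
  funext p
  simp [codeAct, mul_smul]

theorem codeAct_inv_codeAct (g : G) (w : Code X) : codeAct g⁻¹ (codeAct g w) = w := by
  rw [← codeAct_mul, inv_mul_cancel, codeAct_one]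

theorem continuous_codeAct (g : G) : Continuous (codeAct g : Code X → Code X) :=
  continuous_pi fun _ => continuous_apply _

end CodeAct

variable {X : Type*} [CircularOrder X]

open scoped Classical in
noncomputable def code (x : X) : Code X := fun p => decide (x ∈ ternIcc sbtw p.1 p.2)

theorem code_apply_diag_eq_true {x a : X} : code x (a, a) = true ↔ x = a := by
  simp [code, ternIcc_sbtw_self]

theorem code_injective : Function.Injective (code : X → Code X) := fun _ _ h =>
  code_apply_diag_eq_true.1 (h ▸ code_apply_diag_eq_true.2 rfl)

theorem iccEquiv_iff_eqOn_code {E : Finset X} {x y : X} :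
    IccEquiv E x y ↔ EqOn (code x) (code y) ↑(E ×ˢ E) := by
  simp only [IccEquiv, EqOn, Finset.coe_product, mem_prod, Finset.mem_coe, code,
    decide_eq_decide, Prod.forall]
  exact ⟨fun h a b hab => h a hab.1 b hab.2, fun h a ha b hb => h a b ⟨ha, hb⟩⟩

def carrier (X : Type*) [CircularOrder X] : Set (Code X) := closure (range code)

theorem code_mem_carrier (x : X) : code x ∈ carrier X := subset_closure (mem_range_self x)

theorem exists_code_eqOn {w : Code X} (hw : w ∈ carrier X) (F : Finset (X × X)) :
    ∃ x, EqOn (code x) w ↑F := by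
  obtain ⟨_, hx, x, rfl⟩ := mem_closure_iff.1 hw _ (isOpen_setOf_eqOn w F) fun _ _ => rfl
  exact ⟨x, hx⟩

theorem eq_code_of_apply_diag {w : Code X} (hw : w ∈ carrier X) {a : X} (h : w (a, a) = true) :
    w = code a := by
  classical
  funext p
  obtain ⟨x, hx⟩ := exists_code_eqOn hw {(a, a), p}
  have hxa : x = a := code_apply_diag_eq_true.1 ((hx (by simp)).trans h)
  rw [← hx (by simp), hxa]

def btwTriples (X : Type*) [CircularOrder X] : Set (Code X × Code X × Code X) :=
  {t | ∃ x y z, btw x y z ∧ t = (code x, code y, code z)}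

def LimBtw (u v w : Code X) : Prop := (u, v, w) ∈ closure (btwTriples X)

variable {u v w : Code X}

theorem LimBtw.exists_btw_eqOn (h : LimBtw u v w) (F : Finset (X × X)) :
    ∃ x y z, btw x y z ∧
      EqOn (code x) u ↑F ∧ EqOn (code y) v ↑F ∧ EqOn (code z) w ↑F := by
  obtain ⟨_, ⟨hx, hy, hz⟩, x, y, z, hxyz, rfl⟩ := mem_closure_iff.1 h _
    ((isOpen_setOf_eqOn u F).prod ((isOpen_setOf_eqOn v F).prod (isOpen_setOf_eqOn w F)))
    ⟨fun _ _ => rfl, fun _ _ => rfl, fun _ _ => rfl⟩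
  exact ⟨x, y, z, hxyz, hx, hy, hz⟩

theorem limBtw_code {x y z : X} (h : btw x y z) : LimBtw (code x) (code y) (code z) :=
  subset_closure ⟨x, y, z, h, rfl⟩

theorem LimBtw.cyclic (h : LimBtw u v w) : LimBtw v w u :=
  map_mem_closure (f := fun t : Code X × Code X × Code X => (t.2.1, t.2.2, t.1)) (by fun_prop) h
    fun _ ⟨x, y, z, hxyz, ht⟩ => ⟨y, z, x, hxyz.cyclic_left, by simp [ht]⟩

theorem limBtw_refl_left (hu : u ∈ carrier X) (hw : w ∈ carrier X) : LimBtw u u w :=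
  map_mem_closure₂ (f := fun s t => (s, s, t)) (by fun_prop) hu hw
    fun _ ⟨x, hx⟩ _ ⟨y, hy⟩ => ⟨x, x, y, btw_rfl_left, by simp [hx, hy]⟩

theorem limBtw_refl_right (hu : u ∈ carrier X) (hw : w ∈ carrier X) : LimBtw u w w :=
  map_mem_closure₂ (f := fun s t => (s, t, t)) (by fun_prop) hu hw
    fun _ ⟨x, hx⟩ _ ⟨y, hy⟩ => ⟨x, y, y, btw_rfl_right, by simp [hx, hy]⟩

theorem limBtw_refl_left_right (hu : u ∈ carrier X) (hw : w ∈ carrier X) : LimBtw u w u :=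
  map_mem_closure₂ (f := fun s t => (s, t, s)) (by fun_prop) hu hw
    fun _ ⟨x, hx⟩ _ ⟨y, hy⟩ => ⟨x, y, x, btw_rfl_left_right, by simp [hx, hy]⟩

theorem limBtw_total (hu : u ∈ carrier X) (hv : v ∈ carrier X) (hw : w ∈ carrier X) :
    LimBtw u v w ∨ LimBtw w v u := by
  have hmem : (u, v, w) ∈ closure (btwTriples X ∪
      (fun t : Code X × Code X × Code X => (t.2.2, t.2.1, t.1)) '' btwTriples X) := by
    refine closure_mono ?_ (by rw [closure_prod_eq, closure_prod_eq]; exact ⟨hu, hv, hw⟩)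
    rintro ⟨_, _, _⟩ ⟨⟨x, rfl⟩, ⟨y, rfl⟩, ⟨z, rfl⟩⟩
    rcases btw_total x y z with h | h
    · exact .inl ⟨x, y, z, h, rfl⟩
    · exact .inr ⟨_, ⟨z, y, x, h, rfl⟩, rfl⟩
  rw [closure_union] at hmem
  refine hmem.imp id fun h => show (w, v, u) ∈ closure (btwTriples X) from map_mem_closure
    (f := fun t : Code X × Code X × Code X => (t.2.2, t.2.1, t.1)) (by fun_prop) h ?_
  rintro _ ⟨t, ht, rfl⟩
  exact ht

theorem iccEquiv_of_eqOn_code {E : Finset X} {s t : X} (hs : EqOn (code s) u ↑(E ×ˢ E))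
    (ht : EqOn (code t) u ↑(E ×ˢ E)) : IccEquiv E s t :=
  iccEquiv_iff_eqOn_code.2 (hs.trans ht.symm)

theorem not_iccEquiv_of_eqOn_code {E : Finset X} {s t : X} (hs : EqOn (code s) u ↑(E ×ˢ E))
    (ht : EqOn (code t) v ↑(E ×ˢ E)) (huv : ¬EqOn u v ↑(E ×ˢ E)) : ¬IccEquiv E s t :=
  fun hst => huv ((hs.symm.trans (iccEquiv_iff_eqOn_code.1 hst)).trans ht)

theorem LimBtw.sbtw_of_eqOn {E : Finset X} (h : LimBtw u v w) (huv : ¬EqOn u v ↑(E ×ˢ E))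
    (hvw : ¬EqOn v w ↑(E ×ˢ E)) (hwu : ¬EqOn w u ↑(E ×ˢ E)) {x y z : X}
    (hx : EqOn (code x) u ↑(E ×ˢ E)) (hy : EqOn (code y) v ↑(E ×ˢ E))
    (hz : EqOn (code z) w ↑(E ×ˢ E)) : sbtw x y z := by
  obtain ⟨x₀, y₀, z₀, hxyz₀, hx₀, hy₀, hz₀⟩ := h.exists_btw_eqOn (E ×ˢ E)
  have hxy₀ := not_iccEquiv_of_eqOn_code hx₀ hy₀ huv
  have hyz₀ := not_iccEquiv_of_eqOn_code hy₀ hz₀ hvw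
  have hzx₀ := not_iccEquiv_of_eqOn_code hz₀ hx₀ hwu
  exact (iccEquiv_of_eqOn_code hx₀ hx).sbtw_congr (iccEquiv_of_eqOn_code hy₀ hy)
    (iccEquiv_of_eqOn_code hz₀ hz) hxy₀ hyz₀ hzx₀ <| sbtw_of_btw_of_ne hxyz₀
      (ne_of_not_iccEquiv hxy₀) (ne_of_not_iccEquiv hyz₀) (ne_of_not_iccEquiv hzx₀)

theorem limBtw_antisymm (hu : u ∈ carrier X) (hv : v ∈ carrier X) (hw : w ∈ carrier X)
    (h : LimBtw u v w) (h' : LimBtw w v u) : u = v ∨ v = w ∨ w = u := by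
  classical
  by_contra! ⟨huv, hvw, hwu⟩
  obtain ⟨E, hE⟩ := exists_finset_separating {u, v, w}
  obtain ⟨x, hx⟩ := exists_code_eqOn hu (E ×ˢ E)
  obtain ⟨y, hy⟩ := exists_code_eqOn hv (E ×ˢ E)
  obtain ⟨z, hz⟩ := exists_code_eqOn hw (E ×ˢ E)
  exact sbtw_asymm
    (h.sbtw_of_eqOn (hE u (by simp) v (by simp) huv) (hE v (by simp) w (by simp) hvw)
      (hE w (by simp) u (by simp) hwu) hx hy hz)
    (h'.sbtw_of_eqOn (hE w (by simp) v (by simp) hvw.symm) (hE v (by simp) u (by simp) huv.symm)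
      (hE u (by simp) w (by simp) hwu.symm) hz hy hx)

theorem ne_of_not_limBtw (hu : u ∈ carrier X) (hv : v ∈ carrier X) (hw : w ∈ carrier X)
    (h : ¬LimBtw w v u) : u ≠ v ∧ v ≠ w ∧ w ≠ u := by
  refine ⟨?_, ?_, ?_⟩ <;> rintro rfl
  exacts [h (limBtw_refl_right hw hu), h (limBtw_refl_left hv hu),
    h (limBtw_refl_left_right hw hv)]

theorem limBtw_trans_left {a b c d : Code X} (ha : a ∈ carrier X) (hb : b ∈ carrier X)
    (hc : c ∈ carrier X) (hd : d ∈ carrier X) (habc : LimBtw a b c) (hcba : ¬LimBtw c b a)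
    (hbdc : LimBtw b d c) (hcdb : ¬LimBtw c d b) : LimBtw a d c ∧ ¬LimBtw c d a := by
  classical
  obtain ⟨hab, hbc, hca⟩ := ne_of_not_limBtw ha hb hc hcba
  obtain ⟨hbd, hdc, -⟩ := ne_of_not_limBtw hb hd hc hcdb
  have had : a ≠ d := by
    rintro rfl
    exact hcdb habc.cyclic.cyclic
  have hcda : ¬LimBtw c d a := by
    intro hcda
    obtain ⟨E, hE⟩ := exists_finset_separating {a, b, c, d}
    obtain ⟨xa, hxa⟩ := exists_code_eqOn ha (E ×ˢ E)
    obtain ⟨xb, hxb⟩ := exists_code_eqOn hb (E ×ˢ E)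
    obtain ⟨xc, hxc⟩ := exists_code_eqOn hc (E ×ˢ E)
    obtain ⟨xd, hxd⟩ := exists_code_eqOn hd (E ×ˢ E)
    have habc' := habc.sbtw_of_eqOn (hE a (by simp) b (by simp) hab)
      (hE b (by simp) c (by simp) hbc) (hE c (by simp) a (by simp) hca) hxa hxb hxc
    have hbdc' := hbdc.sbtw_of_eqOn (hE b (by simp) d (by simp) hbd)
      (hE d (by simp) c (by simp) hdc) (hE c (by simp) b (by simp) hbc.symm) hxb hxd hxc
    have hcda' := hcda.sbtw_of_eqOn (hE c (by simp) d (by simp) hdc.symm)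
      (hE d (by simp) a (by simp) had.symm) (hE a (by simp) c (by simp) hca.symm) hxc hxd hxa
    exact sbtw_asymm (habc'.trans_left hbdc') hcda'
  exact ⟨(limBtw_total ha hd hc).resolve_right hcda, hcda⟩

end CircCompactification

abbrev CircCompactification (X : Type*) [CircularOrder X] := ↥(CircCompactification.carrier X)

namespace CircCompactification

open Set

variable {X : Type*} [CircularOrder X]

noncomputable instance : CircularOrder (CircCompactification X) where
  btw u v w := LimBtw u.1 v.1 w.1
  sbtw u v w := LimBtw u.1 v.1 w.1 ∧ ¬LimBtw w.1 v.1 u.1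
  btw_refl u := limBtw_refl_left u.2 u.2
  btw_cyclic_left := LimBtw.cyclic
  sbtw_iff_btw_not_btw := .rfl
  sbtw_trans_left {a b c d} h h' := limBtw_trans_left a.2 b.2 c.2 d.2 h.1 h.2 h'.1 h'.2
  btw_antisymm {u v w} h h' :=
    (limBtw_antisymm u.2 v.2 w.2 h h').imp Subtype.ext (.imp Subtype.ext Subtype.ext)
  btw_total u v w := limBtw_total u.2 v.2 w.2

noncomputable def embed (x : X) : CircCompactification X := ⟨code x, code_mem_carrier x⟩

instance : CompactSpace (CircCompactification X) :=
  isCompact_iff_compactSpace.1 isClosed_closure.isCompact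

theorem isClosed_ternIcc_sbtw (u v : CircCompactification X) : IsClosed (ternIcc sbtw u v) := by
  by_cases huv : u = v
  · rw [huv, ternIcc_sbtw_self]
    exact isClosed_singleton
  · rw [ternIcc_sbtw_of_ne huv]
    exact isClosed_closure.preimage (f := fun w : CircCompactification X => (u.1, w.1, v.1))
      (by fun_prop)

theorem topology_eq_ternaryTopology :
    (inferInstance : TopologicalSpace (CircCompactification X)) = ternaryTopology sbtw :=
  TopologicalSpace.eq_of_le_of_compactSpace_of_t2Space
    (le_generateFrom fun _ ⟨u, v, hs⟩ => hs ▸ (isClosed_ternIcc_sbtw u v).isOpen_compl)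
    inferInstance t2Space_ternaryTopology

theorem embed_injective : Function.Injective (embed : X → CircCompactification X) :=
  fun _ _ h => code_injective (congrArg Subtype.val h)

theorem sbtw_embed {a b c : X} (h : sbtw a b c) : sbtw (embed a) (embed b) (embed c) := by
  classical
  refine ⟨limBtw_code h.btw, fun h' : LimBtw (code c) (code b) (code a) => ?_⟩
  obtain ⟨E, hE⟩ := exists_finset_separating {code a, code b, code c}
  have hab := code_injective.ne h.left_ne
  have hbc := code_injective.ne h.ne_right
  have hca := code_injective.ne h.left_ne_right.symm
  exact sbtw_asymm h <| h'.sbtw_of_eqOn (hE _ (by simp) _ (by simp) hbc.symm)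
    (hE _ (by simp) _ (by simp) hab.symm) (hE _ (by simp) _ (by simp) hca.symm)
    (eqOn_refl _ _) (eqOn_refl _ _) (eqOn_refl _ _)

theorem isCOP_embed :
    IsCOP (fun a b c : X => sbtw a b c) sbtw (embed : X → CircCompactification X) := by
  refine ⟨fun a b c h _ _ _ => sbtw_embed h, fun a c h => .inl fun x hx => ?_⟩
  rw [embed_injective h, ternIcc_sbtw_self] at hx
  rw [hx, embed_injective h]

theorem dense_range_embed : Dense (range (embed : X → CircCompactification X)) := by
  rw [Subtype.dense_iff, ← range_comp]
  exact subset_rfl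

theorem isOpen_singleton_embed (a : X) : IsOpen {embed a} := by
  have : {embed a} = {w : CircCompactification X | w.1 (a, a) = true} := by
    ext w
    refine ⟨?_, fun h => Subtype.ext (eq_code_of_apply_diag w.2 h)⟩
    rintro rfl
    exact code_apply_diag_eq_true.2 rfl
  rw [this]
  exact ((continuous_apply (a, a) : Continuous fun w : Code X => w (a, a)).comp
    continuous_subtype_val).isOpen_preimage _ (isOpen_discrete {true})

theorem discreteTopology_range_embed :
    DiscreteTopology (range (embed : X → CircCompactification X)) := by
  refine discreteTopology_iff_isOpen_singleton.2 ?_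
  rintro ⟨_, a, rfl⟩
  have : {⟨embed a, a, rfl⟩} =
      ((↑) : range (embed : X → CircCompactification X) → _) ⁻¹' {embed a} := by
    ext
    simp [Subtype.ext_iff]
  rw [this]
  exact (isOpen_singleton_embed a).preimage continuous_subtype_val

section Action

variable {G : Type*} [Group G] [MulAction G X]

theorem code_smul (hG : PreservesSbtw G X) (g : G) (x : X) :
    code (g • x) = codeAct g (code x) := by
  funext p
  have key := hG.sbtw_smul_iff (g := g) (a := g⁻¹ • p.1) (b := x) (c := g⁻¹ • p.2)
  simp only [smul_inv_smul] at key
  simp only [code, codeAct, decide_eq_decide]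
  simp only [ternIcc, mem_union, mem_ofPred_eq, mem_insert_iff, mem_singleton_iff, key,
    smul_eq_iff_eq_inv_smul, Prod.smul_fst, Prod.smul_snd]

theorem codeAct_mem_carrier (hG : PreservesSbtw G X) (g : G) {w : Code X}
    (hw : w ∈ carrier X) : codeAct g w ∈ carrier X :=
  map_mem_closure (continuous_codeAct g) hw fun _ ⟨x, hx⟩ =>
    ⟨g • x, hx ▸ code_smul hG g x⟩

theorem LimBtw.map_codeAct (hG : PreservesSbtw G X) (g : G) {u v w : Code X}
    (h : LimBtw u v w) : LimBtw (codeAct g u) (codeAct g v) (codeAct g w) :=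
  map_mem_closure (f := fun t : Code X × Code X × Code X =>
      (codeAct g t.1, codeAct g t.2.1, codeAct g t.2.2))
    ((continuous_codeAct g).prodMap ((continuous_codeAct g).prodMap (continuous_codeAct g))) h
    fun _ ⟨x, y, z, hxyz, ht⟩ =>
      ⟨g • x, g • y, g • z, hG.btw_smul hxyz, by simp [ht, code_smul hG]⟩

@[reducible] def mulAction (hG : PreservesSbtw G X) : MulAction G (CircCompactification X) where
  smul g w := ⟨codeAct g w.1, codeAct_mem_carrier hG g w.2⟩
  one_smul w := Subtype.ext (codeAct_one w.1)
  mul_smul g h w := Subtype.ext (codeAct_mul g h w.1)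

noncomputable def act (hG : PreservesSbtw G X) : G →* Equiv.Perm (CircCompactification X) :=
  @MulAction.toPermHom G (CircCompactification X) _ (mulAction hG)

theorem coe_act_apply (hG : PreservesSbtw G X) (g : G) (w : CircCompactification X) :
    (act hG g w).1 = codeAct g w.1 :=
  rfl

theorem embed_smul (hG : PreservesSbtw G X) (g : G) (x : X) :
    embed (g • x) = act hG g (embed x) :=
  Subtype.ext (code_smul hG g x)

theorem sbtw_act (hG : PreservesSbtw G X) (g : G) {u v w : CircCompactification X}
    (h : sbtw u v w) : sbtw (act hG g u) (act hG g v) (act hG g w) := by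
  refine ⟨h.1.map_codeAct hG g, fun h' => h.2 ?_⟩
  simpa only [coe_act_apply, codeAct_inv_codeAct] using h'.map_codeAct hG g⁻¹

theorem continuous_act (hG : PreservesSbtw G X) (g : G) : Continuous (act hG g) :=
  ((continuous_codeAct g).comp continuous_subtype_val).subtype_mk _

theorem continuous_act_prod (hG : PreservesSbtw G X) :
    letI : TopologicalSpace G :=
      TopologicalSpace.induced (fun (g : G) (x : X) => g • x)
        (@Pi.topologicalSpace X (fun _ => X) (fun _ => ⊥))
    Continuous (fun q : G × CircCompactification X => act hG q.1 q.2) := by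
  let _ : TopologicalSpace X := ⊥
  have : DiscreteTopology X := ⟨rfl⟩
  let _ : TopologicalSpace G :=
    TopologicalSpace.induced (fun (g : G) (x : X) => g • x) inferInstance
  have hinv : ∀ a : X, Continuous fun g : G => g⁻¹ • a := fun a =>
    continuous_discrete_rng.2 fun e => by
      have : (fun g : G => g⁻¹ • a) ⁻¹' {e} =
          (fun (g : G) (x : X) => g • x) ⁻¹' {f | f e = a} := by
        ext g
        exact inv_smul_eq_iff.trans eq_comm
      exact this ▸ isOpen_induced
        ((continuous_apply e : Continuous fun f : X → X => f e).isOpen_preimage _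
          (isOpen_discrete {a}))
  have heval : Continuous fun q : (X × X) × Code X => q.2 q.1 :=
    continuous_prod_of_discrete_left.2 continuous_apply
  refine Continuous.subtype_mk (continuous_pi fun p => ?_) _
  exact heval.comp ((((hinv p.1).prodMk (hinv p.2)).comp continuous_fst).prodMk
    (continuous_subtype_val.comp continuous_snd))

end Action

end CircCompactification

open CircCompactification in
theorem circular_inverse_limit_compactification_general
    {X : Type u} [CircularOrder X] {G : Type v} [Group G] [MulAction G X]
    (hcop : ∀ (g : G) (a b c : X), sbtw a b c → sbtw (g • a) (g • b) (g • c)) :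
    ∃ (Y : Type u) (cY : CircularOrder Y) (tY : TopologicalSpace Y)
      (act : G →* Equiv.Perm Y) (ν : X → Y),
      letI := tY
      letI : TopologicalSpace G :=
        TopologicalSpace.induced (fun (g : G) (x : X) => g • x)
          (@Pi.topologicalSpace X (fun _ => X) (fun _ => ⊥))
      tY = ternaryTopology (csbtw cY) ∧
      CompactSpace Y ∧ T2Space Y ∧ TotallyDisconnectedSpace Y ∧
      (∀ (g : G) (a b c : Y), csbtw cY a b c → csbtw cY (act g a) (act g b) (act g c)) ∧
      (∀ g : G, Continuous (act g)) ∧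
      Continuous (fun p : G × Y => act p.1 p.2) ∧
      Function.Injective ν ∧
      (∀ (g : G) (x : X), ν (g • x) = act g (ν x)) ∧
      IsCOP (fun a b c : X => sbtw a b c) (csbtw cY) ν ∧
      Dense (Set.range ν) ∧
      DiscreteTopology (Set.range ν) ∧
      (Countable X → TopologicalSpace.MetrizableSpace Y) :=
  ⟨CircCompactification X, inferInstance, inferInstance, act hcop, embed,
    topology_eq_ternaryTopology, inferInstance, inferInstance, inferInstance,
    fun g _ _ _ => sbtw_act hcop g, continuous_act hcop, continuous_act_prod hcop,
    embed_injective, embed_smul hcop, isCOP_embed, dense_range_embed,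
    discreteTopology_range_embed, fun _ => inferInstance⟩

/-- Every effective `sbtw`-preserving action of a group `G` on a circularly
ordered set `X` extends to an action by circular-order preserving homeomorphisms on a compact
Hausdorff totally disconnected circularly ordered space `X∞` (whose topology is the circular
topology), jointly continuous for the pointwise topology on `G` w.r.t. the discrete set `X`,
together with a `G`-equivariant injective circular-order preserving map `ν : X → X∞` with
dense, discrete image; if `X` is countable then `X∞` is metrizable. -/
theorem circular_inverse_limit_compactification
    {X : Type u} [CircularOrder X] {G : Type v} [Group G] [MulAction G X]
    (heff : ∀ g : G, (∀ x : X, g • x = x) → g = 1)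
    (hcop : ∀ (g : G) (a b c : X), sbtw a b c → sbtw (g • a) (g • b) (g • c)) :
    ∃ (Y : Type u) (cY : CircularOrder Y) (tY : TopologicalSpace Y)
      (act : G →* Equiv.Perm Y) (ν : X → Y),
      letI := tY
      letI : TopologicalSpace G :=
        TopologicalSpace.induced (fun (g : G) (x : X) => g • x)
          (@Pi.topologicalSpace X (fun _ => X) (fun _ => ⊥))
      tY = ternaryTopology (csbtw cY) ∧
      CompactSpace Y ∧ T2Space Y ∧ TotallyDisconnectedSpace Y ∧
      (∀ (g : G) (a b c : Y), csbtw cY a b c → csbtw cY (act g a) (act g b) (act g c)) ∧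
      (∀ g : G, Continuous (act g)) ∧
      Continuous (fun p : G × Y => act p.1 p.2) ∧
      Function.Injective ν ∧
      (∀ (g : G) (x : X), ν (g • x) = act g (ν x)) ∧
      IsCOP (fun a b c : X => sbtw a b c) (csbtw cY) ν ∧
      Dense (Set.range ν) ∧
      DiscreteTopology (Set.range ν) ∧
      (Countable X → TopologicalSpace.MetrizableSpace Y) :=
  circular_inverse_limit_compactification_general hcop
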